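/- arXiv:2603.25282 — 4 statements merged into one kernel-verified Lean document; each statement's English description precedes it below -/
import Mathlib

section
/- Let f_x, f_y, f_z be the spin-2 matrices and A the 5×5 matrix with A_{ij} = (1/√5)(-1)^{i-1} δ_{i+j,6}. Then for every vector Ψ ∈ ℂ⁵ and each α ∈ {x, y, z}, the bilinear form Ψᵀ A f_α Ψ equals 0, where Ψᵀ denotes the (non-conjugated) transpose of Ψ. -/
open Matrix

/-- The spin-2 matrix `f_x`. -/
noncomputable def fx : Matrix (Fin 5) (Fin 5) ℂ :=
  !![0, 1, 0, 0, 0;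
     1, 0, (Real.sqrt 6 : ℂ) / 2, 0, 0;
     0, (Real.sqrt 6 : ℂ) / 2, 0, (Real.sqrt 6 : ℂ) / 2, 0;
     0, 0, (Real.sqrt 6 : ℂ) / 2, 0, 1;
     0, 0, 0, 1, 0]

/-- The spin-2 matrix `f_y`. -/
noncomputable def fy : Matrix (Fin 5) (Fin 5) ℂ :=
  Complex.I •
  !![0, -1, 0, 0, 0;
     1, 0, -((Real.sqrt 6 : ℂ) / 2), 0, 0;
     0, (Real.sqrt 6 : ℂ) / 2, 0, -((Real.sqrt 6 : ℂ) / 2), 0;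
     0, 0, (Real.sqrt 6 : ℂ) / 2, 0, -1;
     0, 0, 0, 1, 0]

/-- The spin-2 matrix `f_z`. -/
noncomputable def fz : Matrix (Fin 5) (Fin 5) ℂ :=
  !![2, 0, 0, 0, 0;
     0, 1, 0, 0, 0;
     0, 0, 0, 0, 0;
     0, 0, 0, -1, 0;
     0, 0, 0, 0, -2]

/-- The matrix `A` with `A_{ij} = (1/√5)(-1)^(i-1) δ_{i+j,6}`. -/
noncomputable def Amat : Matrix (Fin 5) (Fin 5) ℂ :=
  !![0, 0, 0, 0, (Real.sqrt 5 : ℂ)⁻¹;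
     0, 0, 0, -(Real.sqrt 5 : ℂ)⁻¹, 0;
     0, 0, (Real.sqrt 5 : ℂ)⁻¹, 0, 0;
     0, -(Real.sqrt 5 : ℂ)⁻¹, 0, 0, 0;
     (Real.sqrt 5 : ℂ)⁻¹, 0, 0, 0, 0]

theorem bilinear_A_f_eq_zero (Ψ : Fin 5 → ℂ) :
    Ψ ⬝ᵥ (Amat *ᵥ (fx *ᵥ Ψ)) = 0 ∧
    Ψ ⬝ᵥ (Amat *ᵥ (fy *ᵥ Ψ)) = 0 ∧
    Ψ ⬝ᵥ (Amat *ᵥ (fz *ᵥ Ψ)) = 0 := by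
  refine ⟨?_, ?_, ?_⟩ <;>
  · simp [fx, fy, fz, Amat, mulVec, dotProduct, Fin.sum_univ_five, Matrix.cons_val_zero,
      Matrix.cons_val_one, Matrix.head_cons, Matrix.smul_apply, Matrix.vecHead, Matrix.vecTail]
    ring
end

section
/- Let M be a 5×5 complex matrix satisfying M⁵ = 5 M³ − 4 M, and let κ be a real number. Then the matrix exponential satisfies exp(−iκM) = I₅ + i((1/6)sin(2κ) − (4/3)sin(κ)) M + ((4/3)cos(κ) − (1/12)cos(2κ) − 5/4) M² + i((1/3)sin(κ) − (1/6)sin(2κ)) M³ + ((1/12)cos(2κ) − (1/3)cos(κ) + 1/4) M⁴. -/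
open Matrix Nat

noncomputable section

namespace MatrixExpQuinticAux

abbrev Mat := Matrix (Fin 5) (Fin 5) ℂ

lemma exp_smul_idem (a : ℂ) (P : Mat) (hP : P * P = P) :
    NormedSpace.exp (a • P) = 1 + (Complex.exp a - 1) • P := by
  letI : SeminormedRing Mat := Matrix.linftyOpSemiNormedRing
  letI : NormedRing Mat := Matrix.linftyOpNormedRing
  letI : NormedAlgebra ℂ Mat := Matrix.linftyOpNormedAlgebra
  have hPn : ∀ n : ℕ, P ^ (n + 1) = P := by
    intro n
    induction n with
    | zero => simp
    | succ n ih => rw [pow_succ, ih, hP]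
  have hfun : ∀ n : ℕ, ((n ! : ℂ))⁻¹ • (a • P) ^ n
      = (a ^ n / n !) • P + (if n = 0 then (1 : Mat) - P else 0) := by
    intro n
    cases n with
    | zero => simp
    | succ n =>
      rw [_root_.smul_pow, hPn, if_neg (Nat.succ_ne_zero n), add_zero, smul_smul]
      congr 1
      ring
  have hs1 : Summable fun n : ℕ => (a ^ n / n ! : ℂ) • P :=
    (NormedSpace.expSeries_div_summable a).smul_const P
  have hs2 : Summable fun n : ℕ => (if n = 0 then (1 : Mat) - P else 0) :=
    (hasSum_ite_eq 0 ((1 : Mat) - P)).summable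
  rw [NormedSpace.exp_eq_tsum ℂ]
  show (∑' n : ℕ, ((n ! : ℂ))⁻¹ • (a • P) ^ n) = _
  rw [tsum_congr hfun, Summable.tsum_add hs1 hs2,
    Summable.tsum_smul_const (NormedSpace.expSeries_div_summable a) P,
    tsum_ite_eq 0 (fun _ : ℕ => (1 : Mat) - P),
    show (∑' z : ℕ, a ^ z / (z ! : ℂ)) = Complex.exp a by
      rw [Complex.exp_eq_exp_ℂ, NormedSpace.exp_eq_tsum_div],
    sub_smul, one_smul]
  abel

end MatrixExpQuinticAux

end

theorem matrix_exp_of_quintic (M : Matrix (Fin 5) (Fin 5) ℂ)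
    (hM : M ^ 5 = (5 : ℂ) • M ^ 3 - (4 : ℂ) • M) (κ : ℝ) :
    NormedSpace.exp ((-Complex.I * (κ : ℂ)) • M) =
      (1 : Matrix (Fin 5) (Fin 5) ℂ)
      + (Complex.I * ((1 / 6 * Real.sin (2 * κ) - 4 / 3 * Real.sin κ : ℝ) : ℂ)) • M
      + (((4 / 3 * Real.cos κ - 1 / 12 * Real.cos (2 * κ) - 5 / 4 : ℝ)) : ℂ) • M ^ 2
      + (Complex.I * ((1 / 3 * Real.sin κ - 1 / 6 * Real.sin (2 * κ) : ℝ) : ℂ)) • M ^ 3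
      + (((1 / 12 * Real.cos (2 * κ) - 1 / 3 * Real.cos κ + 1 / 4 : ℝ)) : ℂ) • M ^ 4 := by
  set c : ℂ := -Complex.I * (κ : ℂ) with hc
  have h6 : M ^ 6 = (5:ℂ) • M ^ 4 - (4:ℂ) • M ^ 2 := by
    rw [show (6:ℕ) = 5 + 1 from rfl, pow_succ, hM, sub_mul, smul_mul_assoc, smul_mul_assoc,
      ← pow_succ, ← pow_two]
  have h7 : M ^ 7 = (21:ℂ) • M ^ 3 - (20:ℂ) • M := by
    rw [show (7:ℕ) = 6 + 1 from rfl, pow_succ, h6, sub_mul, smul_mul_assoc, smul_mul_assoc,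
      ← pow_succ, ← pow_succ, hM]
    module
  have h8 : M ^ 8 = (21:ℂ) • M ^ 4 - (20:ℂ) • M ^ 2 := by
    rw [show (8:ℕ) = 7 + 1 from rfl, pow_succ, h7, sub_mul, smul_mul_assoc, smul_mul_assoc,
      ← pow_succ, ← pow_two]
  have hMM : M * M = M ^ 2 := (pow_two M).symm
  have hpow1 : ∀ n : ℕ, M * M ^ n = M ^ (n + 1) := fun n => (_root_.pow_succ' M n).symm
  have hpow2 : ∀ n : ℕ, M ^ n * M = M ^ (n + 1) := fun n => (pow_succ M n).symm
  have hpow3 : ∀ m n : ℕ, M ^ m * M ^ n = M ^ (m + n) := fun m n => (pow_add M m n).symm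
  set P1 : MatrixExpQuinticAux.Mat := ((-1:ℂ)/6) • M^4 + ((-1:ℂ)/6) • M^3 + ((2:ℂ)/3) • M^2 + ((2:ℂ)/3) • M with hP1
  set Pm1 : MatrixExpQuinticAux.Mat := ((-1:ℂ)/6) • M^4 + ((1:ℂ)/6) • M^3 + ((2:ℂ)/3) • M^2 + ((-2:ℂ)/3) • M with hPm1
  set P2 : MatrixExpQuinticAux.Mat := ((1:ℂ)/24) • M^4 + ((1:ℂ)/12) • M^3 + ((-1:ℂ)/24) • M^2 + ((-1:ℂ)/12) • M with hP2
  set Pm2 : MatrixExpQuinticAux.Mat := ((1:ℂ)/24) • M^4 + ((-1:ℂ)/12) • M^3 + ((-1:ℂ)/24) • M^2 + ((1:ℂ)/12) • M with hPm2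
  have i1 : P1 * P1 = P1 := by
    rw [hP1]
    simp only [add_mul, mul_add, smul_mul_assoc, mul_smul_comm, smul_smul, hpow3, hpow2,
      hpow1, hMM, Nat.reduceAdd, hM, h6, h7, h8]
    match_scalars <;> ring
  have i2 : Pm1 * Pm1 = Pm1 := by
    rw [hPm1]
    simp only [add_mul, mul_add, smul_mul_assoc, mul_smul_comm, smul_smul, hpow3, hpow2,
      hpow1, hMM, Nat.reduceAdd, hM, h6, h7, h8]
    match_scalars <;> ring
  have i3 : P2 * P2 = P2 := by
    rw [hP2]
    simp only [add_mul, mul_add, smul_mul_assoc, mul_smul_comm, smul_smul, hpow3, hpow2,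
      hpow1, hMM, Nat.reduceAdd, hM, h6, h7, h8]
    match_scalars <;> ring
  have i4 : Pm2 * Pm2 = Pm2 := by
    rw [hPm2]
    simp only [add_mul, mul_add, smul_mul_assoc, mul_smul_comm, smul_smul, hpow3, hpow2,
      hpow1, hMM, Nat.reduceAdd, hM, h6, h7, h8]
    match_scalars <;> ring
  have hdecomp : c • M = c • P1 + ((-c) • Pm1 + ((2*c) • P2 + (-(2*c)) • Pm2)) := by
    rw [hP1, hPm1, hP2, hPm2]
    match_scalars <;> ring
  have hcomm1 : Commute (c • P1) ((-c) • Pm1 + ((2*c) • P2 + (-(2*c)) • Pm2)) := by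
    show _ * _ = _ * _
    rw [hP1, hPm1, hP2, hPm2]
    simp only [add_mul, mul_add, smul_mul_assoc, mul_smul_comm, smul_smul, hpow3, hpow2,
      hpow1, hMM, Nat.reduceAdd, hM, h6, h7, h8]
    match_scalars <;> ring
  have hcomm2 : Commute ((-c) • Pm1) ((2*c) • P2 + (-(2*c)) • Pm2) := by
    show _ * _ = _ * _
    rw [hPm1, hP2, hPm2]
    simp only [add_mul, mul_add, smul_mul_assoc, mul_smul_comm, smul_smul, hpow3, hpow2,
      hpow1, hMM, Nat.reduceAdd, hM, h6, h7, h8]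
    match_scalars <;> ring
  have hcomm3 : Commute ((2*c) • P2) ((-(2*c)) • Pm2) := by
    show _ * _ = _ * _
    rw [hP2, hPm2]
    simp only [add_mul, mul_add, smul_mul_assoc, mul_smul_comm, smul_smul, hpow3, hpow2,
      hpow1, hMM, Nat.reduceAdd, hM, h6, h7, h8]
    match_scalars <;> ring
  rw [hdecomp, Matrix.exp_add_of_commute _ _ hcomm1, Matrix.exp_add_of_commute _ _ hcomm2,
    Matrix.exp_add_of_commute _ _ hcomm3,
    MatrixExpQuinticAux.exp_smul_idem c P1 i1, MatrixExpQuinticAux.exp_smul_idem (-c) Pm1 i2,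
    MatrixExpQuinticAux.exp_smul_idem (2*c) P2 i3, MatrixExpQuinticAux.exp_smul_idem (-(2*c)) Pm2 i4]
  have expand : ∀ (a : ℂ) (A S : MatrixExpQuinticAux.Mat), A * S = 0 →
      (1 + a • A) * (1 + S) = 1 + (a • A + S) := by
    intro a A S h
    rw [mul_add, mul_one, add_mul, one_mul, smul_mul_assoc, h, smul_zero, add_zero, add_assoc]
  rw [expand (Complex.exp (2*c) - 1) P2 ((Complex.exp (-(2*c)) - 1) • Pm2) (by
      rw [hP2, hPm2]
      simp only [add_mul, mul_add, smul_mul_assoc, mul_smul_comm, smul_smul, hpow3, hpow2,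
        hpow1, hMM, Nat.reduceAdd, hM, h6, h7, h8]
      match_scalars <;> ring),
    expand (Complex.exp (-c) - 1) Pm1 _ (by
      rw [hPm1, hP2, hPm2]
      simp only [add_mul, mul_add, smul_mul_assoc, mul_smul_comm, smul_smul, hpow3, hpow2,
        hpow1, hMM, Nat.reduceAdd, hM, h6, h7, h8]
      match_scalars <;> ring),
    expand (Complex.exp c - 1) P1 _ (by
      rw [hP1, hPm1, hP2, hPm2]
      simp only [add_mul, mul_add, smul_mul_assoc, mul_smul_comm, smul_smul, hpow3, hpow2,
        hpow1, hMM, Nat.reduceAdd, hM, h6, h7, h8]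
      match_scalars <;> ring)]
  have e1 : Complex.exp c = Complex.cos κ - Complex.sin κ * Complex.I := by
    rw [hc, show -Complex.I * (κ:ℂ) = (-(κ:ℂ)) * Complex.I by ring, Complex.exp_mul_I,
      Complex.cos_neg, Complex.sin_neg]
    ring
  have e2 : Complex.exp (-c) = Complex.cos κ + Complex.sin κ * Complex.I := by
    rw [hc, show -(-Complex.I * (κ:ℂ)) = (κ:ℂ) * Complex.I by ring, Complex.exp_mul_I]
  have e3 : Complex.exp (2*c) = Complex.cos (2*(κ:ℂ)) - Complex.sin (2*(κ:ℂ)) * Complex.I := by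
    rw [hc, show 2 * (-Complex.I * (κ:ℂ)) = (-(2*(κ:ℂ))) * Complex.I by ring, Complex.exp_mul_I,
      Complex.cos_neg, Complex.sin_neg]
    ring
  have e4 : Complex.exp (-(2*c)) = Complex.cos (2*(κ:ℂ)) + Complex.sin (2*(κ:ℂ)) * Complex.I := by
    rw [hc, show -(2 * (-Complex.I * (κ:ℂ))) = (2*(κ:ℂ)) * Complex.I by ring, Complex.exp_mul_I]
  rw [e1, e2, e3, e4, hP1, hPm1, hP2, hPm2]
  push_cast [Complex.ofReal_sin, Complex.ofReal_cos]
  match_scalars <;> ring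
end

section
/- Let A be the 5×5 matrix with A_{ij} = (1/√5)(-1)^{i-1} δ_{i+j,6}. Let v ∈ ℂ⁵, set ρ = ‖v‖² (squared Euclidean norm), A₀₀ = vᵀ A v, and suppose S = √((ρ/5)² − |A₀₀|²/5) is nonzero. Then for every real number θ, the vector w = cos(θ) v + (i/S) sin(θ) ((ρ/5) v − A₀₀ A conj(v)) satisfies ‖w‖² = ‖v‖², where conj(v) denotes the componentwise complex conjugate of v. -/
open Matrix

set_option maxRecDepth 8000 in
set_option maxHeartbeats 1000000 in
theorem nonlinear_integrator_norm_preservation (v : Fin 5 → ℂ) (θ : ℝ)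
    (ρ : ℝ) (hρ : ρ = ∑ i, ‖v i‖ ^ 2)
    (A₀₀ : ℂ) (hA : A₀₀ = v ⬝ᵥ (Amat *ᵥ v))
    (S : ℝ) (hS : S = Real.sqrt ((ρ / 5) ^ 2 - ‖A₀₀‖ ^ 2 / 5))
    (hS0 : S ≠ 0)
    (w : Fin 5 → ℂ)
    (hw : w = (Real.cos θ : ℂ) • v +
      (Complex.I / (S : ℂ) * (Real.sin θ : ℂ)) •
        ((((ρ / 5 : ℝ)) : ℂ) • v - A₀₀ • (Amat *ᵥ star v))) :
    ∑ i, ‖w i‖ ^ 2 = ∑ i, ‖v i‖ ^ 2 := by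
  have hmod : ∀ u : Fin 5 → ℂ,
      ((∑ i, ‖u i‖^2 : ℝ) : ℂ) = ∑ i, u i * (starRingEnd ℂ) (u i) := by
    intro u
    push_cast
    simp [Complex.mul_conj, Complex.normSq_eq_norm_sq]
  have h5 : ((Real.sqrt 5:ℝ):ℂ)^2 = 5 := by norm_cast; exact Real.sq_sqrt (by norm_num)
  have hq : (((Real.sqrt 5:ℝ):ℂ)⁻¹)^2 = 1/5 := by rw [inv_pow, h5]; norm_num
  have h1 : ((Real.cos θ:ℝ):ℂ)^2 + ((Real.sin θ:ℝ):ℂ)^2 = 1 := by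
    norm_cast; exact Real.cos_sq_add_sin_sq θ
  have hTne : ((S:ℝ):ℂ) ≠ 0 := Complex.ofReal_ne_zero.mpr hS0
  have hXnn : 0 ≤ (ρ / 5) ^ 2 - ‖A₀₀‖ ^ 2 / 5 := by
    by_contra h
    push_neg at h
    exact hS0 (hS.trans ((Real.sqrt_eq_zero').mpr h.le))
  have hS2 : S^2 = (ρ / 5) ^ 2 - ‖A₀₀‖ ^ 2 / 5 := by
    rw [hS]; exact Real.sq_sqrt hXnn
  have hT2 : ((S:ℝ):ℂ)^2 = ((ρ:ℂ)/5)^2 - A₀₀ * (starRingEnd ℂ) A₀₀ / 5 := by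
    have h := congrArg (Complex.ofReal) hS2
    push_cast at h
    rw [h, Complex.mul_conj, Complex.normSq_eq_norm_sq]
    push_cast
    ring
  have hAe : A₀₀ = ((Real.sqrt 5:ℝ):ℂ)⁻¹ * (2 * v 0 * v 4 - 2 * v 1 * v 3 + v 2 ^ 2) := by
    rw [hA]
    simp [Amat, Matrix.mulVec, dotProduct, Fin.sum_univ_five, Matrix.vecHead, Matrix.vecTail]
    ring
  have hAce : (starRingEnd ℂ) A₀₀ = ((Real.sqrt 5:ℝ):ℂ)⁻¹ *
      (2 * (starRingEnd ℂ) (v 0) * (starRingEnd ℂ) (v 4)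
        - 2 * (starRingEnd ℂ) (v 1) * (starRingEnd ℂ) (v 3) + (starRingEnd ℂ) (v 2) ^ 2) := by
    rw [hAe]
    simp only [_root_.map_mul, _root_.map_sub, _root_.map_add, _root_.map_pow, map_inv₀, Complex.conj_ofReal, map_ofNat]
  have h2 : (((ρ:ℂ)/5)^2 - A₀₀ * (starRingEnd ℂ) A₀₀ / 5) * (((S:ℝ):ℂ)⁻¹)^2 = 1 := by
    rw [← hT2]
    field_simp
  rw [hAce, hAe] at h2
  have h4 : v 0 * (starRingEnd ℂ) (v 0) + v 1 * (starRingEnd ℂ) (v 1)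
      + v 2 * (starRingEnd ℂ) (v 2) + v 3 * (starRingEnd ℂ) (v 3)
      + v 4 * (starRingEnd ℂ) (v 4) = (ρ:ℂ) := by
    have h := (hmod v).symm
    rw [Fin.sum_univ_five] at h
    rw [h, hρ]
  have hu0 : (Amat *ᵥ star v) 0 = ((Real.sqrt 5:ℝ):ℂ)⁻¹ * (starRingEnd ℂ) (v 4) := by
    simp [Amat, Matrix.mulVec, dotProduct, Fin.sum_univ_five, Matrix.vecHead,
      Matrix.vecTail, Pi.star_apply, RCLike.star_def]
  have hu1 : (Amat *ᵥ star v) 1 = -(((Real.sqrt 5:ℝ):ℂ)⁻¹ * (starRingEnd ℂ) (v 3)) := by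
    simp [Amat, Matrix.mulVec, dotProduct, Fin.sum_univ_five, Matrix.vecHead,
      Matrix.vecTail, Pi.star_apply, RCLike.star_def]
  have hu2 : (Amat *ᵥ star v) 2 = ((Real.sqrt 5:ℝ):ℂ)⁻¹ * (starRingEnd ℂ) (v 2) := by
    simp [Amat, Matrix.mulVec, dotProduct, Fin.sum_univ_five, Matrix.vecHead,
      Matrix.vecTail, Pi.star_apply, RCLike.star_def]
  have hu3 : (Amat *ᵥ star v) 3 = -(((Real.sqrt 5:ℝ):ℂ)⁻¹ * (starRingEnd ℂ) (v 1)) := by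
    simp [Amat, Matrix.mulVec, dotProduct, Fin.sum_univ_five, Matrix.vecHead,
      Matrix.vecTail, Pi.star_apply, RCLike.star_def]
  have hu4 : (Amat *ᵥ star v) 4 = ((Real.sqrt 5:ℝ):ℂ)⁻¹ * (starRingEnd ℂ) (v 0) := by
    simp [Amat, Matrix.mulVec, dotProduct, Fin.sum_univ_five, Matrix.vecHead,
      Matrix.vecTail, Pi.star_apply, RCLike.star_def]
  have key : ∑ i, w i * (starRingEnd ℂ) (w i) = ∑ i, v i * (starRingEnd ℂ) (v i) := by
    subst hw
    simp only [Fin.sum_univ_five, Pi.add_apply, Pi.smul_apply, Pi.sub_apply, smul_eq_mul]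
    rw [hu0, hu1, hu2, hu3, hu4, hAe]
    simp only [_root_.map_add, _root_.map_mul, _root_.map_sub, _root_.map_div₀, map_inv₀,
      _root_.map_pow, map_ofNat, _root_.map_neg, Complex.conj_ofReal, Complex.conj_I,
      Complex.conj_conj, Complex.ofReal_div, Complex.ofReal_ofNat]
    linear_combination
      (v 0 * (starRingEnd ℂ) (v 0) + v 1 * (starRingEnd ℂ) (v 1) + v 2 * (starRingEnd ℂ) (v 2)
        + v 3 * (starRingEnd ℂ) (v 3) + v 4 * (starRingEnd ℂ) (v 4)) * h1
      + ((Real.sin θ:ℝ):ℂ)^2 * (v 0 * (starRingEnd ℂ) (v 0) + v 1 * (starRingEnd ℂ) (v 1)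
        + v 2 * (starRingEnd ℂ) (v 2) + v 3 * (starRingEnd ℂ) (v 3)
        + v 4 * (starRingEnd ℂ) (v 4)) * h2
      + ((Real.sin θ:ℝ):ℂ)^2 * (((S:ℝ):ℂ)⁻¹)^2 * (((Real.sqrt 5:ℝ):ℂ)⁻¹)^2
        * (2 * v 0 * v 4 - 2 * v 1 * v 3 + v 2 ^ 2)
        * (2 * (starRingEnd ℂ) (v 0) * (starRingEnd ℂ) (v 4)
          - 2 * (starRingEnd ℂ) (v 1) * (starRingEnd ℂ) (v 3) + (starRingEnd ℂ) (v 2) ^ 2)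
        * (v 0 * (starRingEnd ℂ) (v 0) + v 1 * (starRingEnd ℂ) (v 1)
          + v 2 * (starRingEnd ℂ) (v 2) + v 3 * (starRingEnd ℂ) (v 3)
          + v 4 * (starRingEnd ℂ) (v 4)) * hq
      + (2/5) * ((Real.sin θ:ℝ):ℂ)^2 * (((S:ℝ):ℂ)⁻¹)^2 * (((Real.sqrt 5:ℝ):ℂ)⁻¹)^2
        * (2 * v 0 * v 4 - 2 * v 1 * v 3 + v 2 ^ 2)
        * (2 * (starRingEnd ℂ) (v 0) * (starRingEnd ℂ) (v 4)
          - 2 * (starRingEnd ℂ) (v 1) * (starRingEnd ℂ) (v 3) + (starRingEnd ℂ) (v 2) ^ 2)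
        * h4
      + (-(((Real.sin θ:ℝ):ℂ)^2 * (((S:ℝ):ℂ)⁻¹)^2) *
          (((ρ:ℂ)^2/25) * (v 0 * (starRingEnd ℂ) (v 0) + v 1 * (starRingEnd ℂ) (v 1)
            + v 2 * (starRingEnd ℂ) (v 2) + v 3 * (starRingEnd ℂ) (v 3)
            + v 4 * (starRingEnd ℂ) (v 4))
          - (2*(ρ:ℂ)/5) * (((Real.sqrt 5:ℝ):ℂ)⁻¹)^2
            * (2 * v 0 * v 4 - 2 * v 1 * v 3 + v 2 ^ 2)
            * (2 * (starRingEnd ℂ) (v 0) * (starRingEnd ℂ) (v 4)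
              - 2 * (starRingEnd ℂ) (v 1) * (starRingEnd ℂ) (v 3) + (starRingEnd ℂ) (v 2) ^ 2)
          + (((Real.sqrt 5:ℝ):ℂ)⁻¹)^4
            * (2 * v 0 * v 4 - 2 * v 1 * v 3 + v 2 ^ 2)
            * (2 * (starRingEnd ℂ) (v 0) * (starRingEnd ℂ) (v 4)
              - 2 * (starRingEnd ℂ) (v 1) * (starRingEnd ℂ) (v 3) + (starRingEnd ℂ) (v 2) ^ 2)
            * (v 0 * (starRingEnd ℂ) (v 0) + v 1 * (starRingEnd ℂ) (v 1)
              + v 2 * (starRingEnd ℂ) (v 2) + v 3 * (starRingEnd ℂ) (v 3)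
              + v 4 * (starRingEnd ℂ) (v 4)))) * Complex.I_sq
  have hfin := key
  rw [← hmod w, ← hmod v] at hfin
  exact_mod_cast hfin
end

section
/- Let f_x, f_y, f_z be the spin-2 matrices and A the 5×5 matrix with A_{ij} = (1/√5)(-1)^{i-1} δ_{i+j,6}. Let V, c₀, c₁, c₂ be real constants and let Ψ : ℝ → ℂ⁵ be differentiable and satisfy, for all t, i Ψ'(t) = [(V + c₀ ρ(Ψ(t))) I₅ + c₁ (F_x(Ψ(t)) f_x + F_y(Ψ(t)) f_y + F_z(Ψ(t)) f_z)] Ψ(t) + c₂ A₀₀(Ψ(t)) A conj(Ψ(t)), where ρ(Ψ) = Ψᴴ Ψ, F_α(Ψ) = Ψᴴ f_α Ψ, A₀₀(Ψ) = Ψᵀ A Ψ, and conj denotes componentwise complex conjugation. Then the spin vector is conserved: for each α ∈ {x, y, z}, F_α(Ψ(t)) = F_α(Ψ(0)) for all t. -/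
open Matrix

/-- Density `ρ(Ψ) = Ψᴴ Ψ`. -/
noncomputable def rho (Ψ : Fin 5 → ℂ) : ℂ := star Ψ ⬝ᵥ Ψ

/-- Spin expectation `F_α(Ψ) = Ψᴴ f_α Ψ` for a spin matrix `f`. -/
noncomputable def Fsp (f : Matrix (Fin 5) (Fin 5) ℂ) (Ψ : Fin 5 → ℂ) : ℂ :=
  star Ψ ⬝ᵥ (f *ᵥ Ψ)

/-- Spin-singlet pair amplitude `A₀₀(Ψ) = Ψᵀ A Ψ`. -/
noncomputable def A00 (Ψ : Fin 5 → ℂ) : ℂ := Ψ ⬝ᵥ (Amat *ᵥ Ψ)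

/-- Right-hand side of the nonlinear subproblem ODE (i.e. `𝓑Ψ`). -/
noncomputable def nonlinearRHS (V c₀ c₁ c₂ : ℝ) (Ψ : Fin 5 → ℂ) : Fin 5 → ℂ :=
  ((((V : ℂ) + (c₀ : ℂ) * rho Ψ) • (1 : Matrix (Fin 5) (Fin 5) ℂ)
      + (c₁ : ℂ) • (Fsp fx Ψ • fx + Fsp fy Ψ • fy + Fsp fz Ψ • fz)) *ᵥ Ψ)
    + ((c₂ : ℂ) * A00 Ψ) • (Amat *ᵥ star Ψ)

/-! ### Auxiliary matrix identities -/

private lemma sq6 : (Real.sqrt 6 : ℂ) * (Real.sqrt 6 : ℂ) = 6 := by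
  rw [← Complex.ofReal_mul, Real.mul_self_sqrt (by norm_num)]; norm_num

set_option maxHeartbeats 1000000 in
private lemma fx_herm : fxᴴ = fx := by
  rw [← Matrix.ext_iff]
  simp [Fin.forall_fin_succ, fx, Matrix.conjTranspose_apply,
    Matrix.transpose_apply, Matrix.neg_apply, Matrix.sub_apply, Matrix.mul_apply,
    Matrix.smul_apply, Fin.sum_univ_five, Matrix.vecHead, Matrix.vecTail, Complex.ext_iff]

set_option maxHeartbeats 1000000 in
private lemma fy_herm : fyᴴ = fy := by
  rw [← Matrix.ext_iff]
  simp [Fin.forall_fin_succ, fy, Matrix.conjTranspose_apply,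
    Matrix.transpose_apply, Matrix.neg_apply, Matrix.sub_apply, Matrix.mul_apply,
    Matrix.smul_apply, Fin.sum_univ_five, Matrix.vecHead, Matrix.vecTail, Complex.ext_iff]

set_option maxHeartbeats 1000000 in
private lemma fz_herm : fzᴴ = fz := by
  rw [← Matrix.ext_iff]
  simp [Fin.forall_fin_succ, fz, Matrix.conjTranspose_apply,
    Matrix.transpose_apply, Matrix.neg_apply, Matrix.sub_apply, Matrix.mul_apply,
    Matrix.smul_apply, Fin.sum_univ_five, Matrix.vecHead, Matrix.vecTail, Complex.ext_iff]

set_option maxHeartbeats 1000000 in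
private lemma Amat_herm : Amatᴴ = Amat := by
  rw [← Matrix.ext_iff]
  simp [Fin.forall_fin_succ, Amat, Matrix.conjTranspose_apply,
    Matrix.transpose_apply, Matrix.neg_apply, Matrix.sub_apply, Matrix.mul_apply,
    Matrix.smul_apply, Fin.sum_univ_five, Matrix.vecHead, Matrix.vecTail, Complex.ext_iff]

set_option maxHeartbeats 1000000 in
private lemma comm_xy : fx * fy - fy * fx = Complex.I • fz := by
  rw [← Matrix.ext_iff]
  simp [Fin.forall_fin_succ, fx, fy, fz, Matrix.conjTranspose_apply,
    Matrix.transpose_apply, Matrix.neg_apply, Matrix.sub_apply, Matrix.mul_apply,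
    Matrix.smul_apply, Fin.sum_univ_five, Matrix.vecHead, Matrix.vecTail]
  repeat' apply And.intro
  all_goals first
    | ring1
    | linear_combination (Complex.I) * sq6
    | linear_combination (-Complex.I) * sq6
    | linear_combination (Complex.I/2) * sq6
    | linear_combination (-(Complex.I/2)) * sq6
    | linear_combination ((Real.sqrt 6 : ℂ)) * Complex.I_sq
    | linear_combination (-(Real.sqrt 6 : ℂ)) * Complex.I_sq
    | linear_combination (((Real.sqrt 6 : ℂ)/2)) * Complex.I_sq
    | linear_combination (-((Real.sqrt 6 : ℂ)/2)) * Complex.I_sq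
    | linear_combination (Complex.I) * sq6 + ((Real.sqrt 6 : ℂ)) * Complex.I_sq
    | linear_combination (Complex.I) * sq6 + (-(Real.sqrt 6 : ℂ)) * Complex.I_sq
    | linear_combination (Complex.I) * sq6 + (((Real.sqrt 6 : ℂ)/2)) * Complex.I_sq
    | linear_combination (Complex.I) * sq6 + (-((Real.sqrt 6 : ℂ)/2)) * Complex.I_sq
    | linear_combination (-Complex.I) * sq6 + ((Real.sqrt 6 : ℂ)) * Complex.I_sq
    | linear_combination (-Complex.I) * sq6 + (-(Real.sqrt 6 : ℂ)) * Complex.I_sq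
    | linear_combination (-Complex.I) * sq6 + (((Real.sqrt 6 : ℂ)/2)) * Complex.I_sq
    | linear_combination (-Complex.I) * sq6 + (-((Real.sqrt 6 : ℂ)/2)) * Complex.I_sq
    | linear_combination (Complex.I/2) * sq6 + ((Real.sqrt 6 : ℂ)) * Complex.I_sq
    | linear_combination (Complex.I/2) * sq6 + (-(Real.sqrt 6 : ℂ)) * Complex.I_sq
    | linear_combination (Complex.I/2) * sq6 + (((Real.sqrt 6 : ℂ)/2)) * Complex.I_sq
    | linear_combination (Complex.I/2) * sq6 + (-((Real.sqrt 6 : ℂ)/2)) * Complex.I_sq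
    | linear_combination (-(Complex.I/2)) * sq6 + ((Real.sqrt 6 : ℂ)) * Complex.I_sq
    | linear_combination (-(Complex.I/2)) * sq6 + (-(Real.sqrt 6 : ℂ)) * Complex.I_sq
    | linear_combination (-(Complex.I/2)) * sq6 + (((Real.sqrt 6 : ℂ)/2)) * Complex.I_sq
    | linear_combination (-(Complex.I/2)) * sq6 + (-((Real.sqrt 6 : ℂ)/2)) * Complex.I_sq
set_option maxHeartbeats 1000000 in
private lemma comm_yz : fy * fz - fz * fy = Complex.I • fx := by
  rw [← Matrix.ext_iff]
  simp [Fin.forall_fin_succ, fx, fy, fz, Matrix.conjTranspose_apply,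
    Matrix.transpose_apply, Matrix.neg_apply, Matrix.sub_apply, Matrix.mul_apply,
    Matrix.smul_apply, Fin.sum_univ_five, Matrix.vecHead, Matrix.vecTail]
  repeat' apply And.intro
  all_goals first
    | ring1
    | linear_combination (Complex.I) * sq6
    | linear_combination (-Complex.I) * sq6
    | linear_combination (Complex.I/2) * sq6
    | linear_combination (-(Complex.I/2)) * sq6
    | linear_combination ((Real.sqrt 6 : ℂ)) * Complex.I_sq
    | linear_combination (-(Real.sqrt 6 : ℂ)) * Complex.I_sq
    | linear_combination (((Real.sqrt 6 : ℂ)/2)) * Complex.I_sq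
    | linear_combination (-((Real.sqrt 6 : ℂ)/2)) * Complex.I_sq
    | linear_combination (Complex.I) * sq6 + ((Real.sqrt 6 : ℂ)) * Complex.I_sq
    | linear_combination (Complex.I) * sq6 + (-(Real.sqrt 6 : ℂ)) * Complex.I_sq
    | linear_combination (Complex.I) * sq6 + (((Real.sqrt 6 : ℂ)/2)) * Complex.I_sq
    | linear_combination (Complex.I) * sq6 + (-((Real.sqrt 6 : ℂ)/2)) * Complex.I_sq
    | linear_combination (-Complex.I) * sq6 + ((Real.sqrt 6 : ℂ)) * Complex.I_sq
    | linear_combination (-Complex.I) * sq6 + (-(Real.sqrt 6 : ℂ)) * Complex.I_sq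
    | linear_combination (-Complex.I) * sq6 + (((Real.sqrt 6 : ℂ)/2)) * Complex.I_sq
    | linear_combination (-Complex.I) * sq6 + (-((Real.sqrt 6 : ℂ)/2)) * Complex.I_sq
    | linear_combination (Complex.I/2) * sq6 + ((Real.sqrt 6 : ℂ)) * Complex.I_sq
    | linear_combination (Complex.I/2) * sq6 + (-(Real.sqrt 6 : ℂ)) * Complex.I_sq
    | linear_combination (Complex.I/2) * sq6 + (((Real.sqrt 6 : ℂ)/2)) * Complex.I_sq
    | linear_combination (Complex.I/2) * sq6 + (-((Real.sqrt 6 : ℂ)/2)) * Complex.I_sq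
    | linear_combination (-(Complex.I/2)) * sq6 + ((Real.sqrt 6 : ℂ)) * Complex.I_sq
    | linear_combination (-(Complex.I/2)) * sq6 + (-(Real.sqrt 6 : ℂ)) * Complex.I_sq
    | linear_combination (-(Complex.I/2)) * sq6 + (((Real.sqrt 6 : ℂ)/2)) * Complex.I_sq
    | linear_combination (-(Complex.I/2)) * sq6 + (-((Real.sqrt 6 : ℂ)/2)) * Complex.I_sq
set_option maxHeartbeats 1000000 in
private lemma comm_zx : fz * fx - fx * fz = Complex.I • fy := by
  rw [← Matrix.ext_iff]
  simp [Fin.forall_fin_succ, fx, fy, fz, Matrix.conjTranspose_apply,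
    Matrix.transpose_apply, Matrix.neg_apply, Matrix.sub_apply, Matrix.mul_apply,
    Matrix.smul_apply, Fin.sum_univ_five, Matrix.vecHead, Matrix.vecTail]
  repeat' apply And.intro
  all_goals first
    | ring1
    | linear_combination (Complex.I) * sq6
    | linear_combination (-Complex.I) * sq6
    | linear_combination (Complex.I/2) * sq6
    | linear_combination (-(Complex.I/2)) * sq6
    | linear_combination ((Real.sqrt 6 : ℂ)) * Complex.I_sq
    | linear_combination (-(Real.sqrt 6 : ℂ)) * Complex.I_sq
    | linear_combination (((Real.sqrt 6 : ℂ)/2)) * Complex.I_sq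
    | linear_combination (-((Real.sqrt 6 : ℂ)/2)) * Complex.I_sq
    | linear_combination (Complex.I) * sq6 + ((Real.sqrt 6 : ℂ)) * Complex.I_sq
    | linear_combination (Complex.I) * sq6 + (-(Real.sqrt 6 : ℂ)) * Complex.I_sq
    | linear_combination (Complex.I) * sq6 + (((Real.sqrt 6 : ℂ)/2)) * Complex.I_sq
    | linear_combination (Complex.I) * sq6 + (-((Real.sqrt 6 : ℂ)/2)) * Complex.I_sq
    | linear_combination (-Complex.I) * sq6 + ((Real.sqrt 6 : ℂ)) * Complex.I_sq
    | linear_combination (-Complex.I) * sq6 + (-(Real.sqrt 6 : ℂ)) * Complex.I_sq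
    | linear_combination (-Complex.I) * sq6 + (((Real.sqrt 6 : ℂ)/2)) * Complex.I_sq
    | linear_combination (-Complex.I) * sq6 + (-((Real.sqrt 6 : ℂ)/2)) * Complex.I_sq
    | linear_combination (Complex.I/2) * sq6 + ((Real.sqrt 6 : ℂ)) * Complex.I_sq
    | linear_combination (Complex.I/2) * sq6 + (-(Real.sqrt 6 : ℂ)) * Complex.I_sq
    | linear_combination (Complex.I/2) * sq6 + (((Real.sqrt 6 : ℂ)/2)) * Complex.I_sq
    | linear_combination (Complex.I/2) * sq6 + (-((Real.sqrt 6 : ℂ)/2)) * Complex.I_sq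
    | linear_combination (-(Complex.I/2)) * sq6 + ((Real.sqrt 6 : ℂ)) * Complex.I_sq
    | linear_combination (-(Complex.I/2)) * sq6 + (-(Real.sqrt 6 : ℂ)) * Complex.I_sq
    | linear_combination (-(Complex.I/2)) * sq6 + (((Real.sqrt 6 : ℂ)/2)) * Complex.I_sq
    | linear_combination (-(Complex.I/2)) * sq6 + (-((Real.sqrt 6 : ℂ)/2)) * Complex.I_sq
set_option maxHeartbeats 1000000 in
private lemma Afx_anti : (Amat * fx)ᵀ = -(Amat * fx) := by
  rw [← Matrix.ext_iff]
  simp [Fin.forall_fin_succ, Amat, fx, Matrix.conjTranspose_apply,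
    Matrix.transpose_apply, Matrix.neg_apply, Matrix.sub_apply, Matrix.mul_apply,
    Matrix.smul_apply, Fin.sum_univ_five, Matrix.vecHead, Matrix.vecTail]
  repeat' apply And.intro
  all_goals ring1

set_option maxHeartbeats 1000000 in
private lemma fxA_anti : (fx * Amat)ᵀ = -(fx * Amat) := by
  rw [← Matrix.ext_iff]
  simp [Fin.forall_fin_succ, Amat, fx, Matrix.conjTranspose_apply,
    Matrix.transpose_apply, Matrix.neg_apply, Matrix.sub_apply, Matrix.mul_apply,
    Matrix.smul_apply, Fin.sum_univ_five, Matrix.vecHead, Matrix.vecTail]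
  repeat' apply And.intro
  all_goals ring1

set_option maxHeartbeats 1000000 in
private lemma Afy_anti : (Amat * fy)ᵀ = -(Amat * fy) := by
  rw [← Matrix.ext_iff]
  simp [Fin.forall_fin_succ, Amat, fy, Matrix.conjTranspose_apply,
    Matrix.transpose_apply, Matrix.neg_apply, Matrix.sub_apply, Matrix.mul_apply,
    Matrix.smul_apply, Fin.sum_univ_five, Matrix.vecHead, Matrix.vecTail]
  repeat' apply And.intro
  all_goals ring1

set_option maxHeartbeats 1000000 in
private lemma fyA_anti : (fy * Amat)ᵀ = -(fy * Amat) := by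
  rw [← Matrix.ext_iff]
  simp [Fin.forall_fin_succ, Amat, fy, Matrix.conjTranspose_apply,
    Matrix.transpose_apply, Matrix.neg_apply, Matrix.sub_apply, Matrix.mul_apply,
    Matrix.smul_apply, Fin.sum_univ_five, Matrix.vecHead, Matrix.vecTail]
  repeat' apply And.intro
  all_goals ring1

set_option maxHeartbeats 1000000 in
private lemma Afz_anti : (Amat * fz)ᵀ = -(Amat * fz) := by
  rw [← Matrix.ext_iff]
  simp [Fin.forall_fin_succ, Amat, fz, Matrix.conjTranspose_apply,
    Matrix.transpose_apply, Matrix.neg_apply, Matrix.sub_apply, Matrix.mul_apply,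
    Matrix.smul_apply, Fin.sum_univ_five, Matrix.vecHead, Matrix.vecTail]
  repeat' apply And.intro
  all_goals ring1

set_option maxHeartbeats 1000000 in
private lemma fzA_anti : (fz * Amat)ᵀ = -(fz * Amat) := by
  rw [← Matrix.ext_iff]
  simp [Fin.forall_fin_succ, Amat, fz, Matrix.conjTranspose_apply,
    Matrix.transpose_apply, Matrix.neg_apply, Matrix.sub_apply, Matrix.mul_apply,
    Matrix.smul_apply, Fin.sum_univ_five, Matrix.vecHead, Matrix.vecTail]
  repeat' apply And.intro
  all_goals ring1

/-! ### Quadratic forms of skew-symmetric matrices vanish -/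

private lemma skew_vanish {M : Matrix (Fin 5) (Fin 5) ℂ} (hM : Mᵀ = -M)
    (v : Fin 5 → ℂ) : v ⬝ᵥ (M *ᵥ v) = 0 := by
  have h : v ⬝ᵥ (M *ᵥ v) = (Mᵀ *ᵥ v) ⬝ᵥ v := by
    rw [Matrix.dotProduct_mulVec, Matrix.mulVec_transpose]
  rw [hM, Matrix.neg_mulVec, neg_dotProduct,
    dotProduct_comm (M *ᵥ v) v] at h
  linear_combination h / 2

/-! ### Reality of the coefficients -/

private lemma rho_real (ψ : Fin 5 → ℂ) : star (rho ψ) = rho ψ := by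
  simp only [rho, dotProduct, star_sum, star_mul', Pi.star_apply, star_star]
  exact Finset.sum_congr rfl fun i _ => mul_comm _ _

private lemma Fsp_real {f : Matrix (Fin 5) (Fin 5) ℂ} (hf : fᴴ = f) (ψ : Fin 5 → ℂ) :
    star (Fsp f ψ) = Fsp f ψ := by
  have h1 : star (Fsp f ψ) = star (f *ᵥ ψ) ⬝ᵥ ψ := by
    rw [Fsp, ← Matrix.star_dotProduct]
  rw [h1, Matrix.star_mulVec, hf, ← Matrix.dotProduct_mulVec, Fsp]

/-! ### Mean-field matrices -/

private noncomputable def Gmat (ψ : Fin 5 → ℂ) : Matrix (Fin 5) (Fin 5) ℂ :=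
  Fsp fx ψ • fx + Fsp fy ψ • fy + Fsp fz ψ • fz

private noncomputable def Hmat (V c₀ c₁ : ℝ) (ψ : Fin 5 → ℂ) :
    Matrix (Fin 5) (Fin 5) ℂ :=
  ((V : ℂ) + (c₀ : ℂ) * rho ψ) • 1 + (c₁ : ℂ) • Gmat ψ

private lemma nonlinearRHS_eq (V c₀ c₁ c₂ : ℝ) (ψ : Fin 5 → ℂ) :
    nonlinearRHS V c₀ c₁ c₂ ψ
      = Hmat V c₀ c₁ ψ *ᵥ ψ + ((c₂ : ℂ) * A00 ψ) • (Amat *ᵥ star ψ) := rfl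

private lemma Hmat_herm (V c₀ c₁ : ℝ) (ψ : Fin 5 → ℂ) :
    (Hmat V c₀ c₁ ψ)ᴴ = Hmat V c₀ c₁ ψ := by
  unfold Hmat Gmat
  rw [Matrix.conjTranspose_add, Matrix.conjTranspose_smul, Matrix.conjTranspose_one,
    Matrix.conjTranspose_smul, Matrix.conjTranspose_add, Matrix.conjTranspose_add,
    Matrix.conjTranspose_smul, Matrix.conjTranspose_smul, Matrix.conjTranspose_smul,
    fx_herm, fy_herm, fz_herm,
    Fsp_real fx_herm, Fsp_real fy_herm, Fsp_real fz_herm]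
  have h1 : star ((V : ℂ) + (c₀ : ℂ) * rho ψ) = (V : ℂ) + (c₀ : ℂ) * rho ψ := by
    rw [star_add, star_mul', rho_real]
    simp [Complex.conj_ofReal, mul_comm]
  have h2 : star ((c₁ : ℂ)) = (c₁ : ℂ) := by simp
  rw [h1, h2]

/-! ### Commutator expectation values vanish -/

private lemma Gmat_comm (ψ : Fin 5 → ℂ) (f : Matrix (Fin 5) (Fin 5) ℂ) :
    Gmat ψ * f - f * Gmat ψ
      = Fsp fx ψ • (fx * f - f * fx) + Fsp fy ψ • (fy * f - f * fy)
        + Fsp fz ψ • (fz * f - f * fz) := by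
  simp only [Gmat, add_mul, mul_add, smul_mul_assoc, mul_smul_comm, smul_sub]
  abel

private lemma Gcomm_x (ψ : Fin 5 → ℂ) :
    star ψ ⬝ᵥ ((Gmat ψ * fx - fx * Gmat ψ) *ᵥ ψ) = 0 := by
  have h1 : fx * fx - fx * fx = (0 : ℂ) • fx := by simp
  have h2 : fy * fx - fx * fy = (-Complex.I) • fz := by
    rw [neg_smul, ← comm_xy]; abel
  rw [Gmat_comm, h1, h2, comm_zx]
  simp only [smul_smul, Matrix.add_mulVec, Matrix.smul_mulVec,
    dotProduct_add, dotProduct_smul, smul_eq_mul, Fsp]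
  ring

private lemma Gcomm_y (ψ : Fin 5 → ℂ) :
    star ψ ⬝ᵥ ((Gmat ψ * fy - fy * Gmat ψ) *ᵥ ψ) = 0 := by
  have h1 : fy * fy - fy * fy = (0 : ℂ) • fy := by simp
  have h3 : fz * fy - fy * fz = (-Complex.I) • fx := by
    rw [neg_smul, ← comm_yz]; abel
  rw [Gmat_comm, h1, h3, comm_xy]
  simp only [smul_smul, Matrix.add_mulVec, Matrix.smul_mulVec,
    dotProduct_add, dotProduct_smul, smul_eq_mul, Fsp]
  ring

private lemma Gcomm_z (ψ : Fin 5 → ℂ) :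
    star ψ ⬝ᵥ ((Gmat ψ * fz - fz * Gmat ψ) *ᵥ ψ) = 0 := by
  have h1 : fz * fz - fz * fz = (0 : ℂ) • fz := by simp
  have h2 : fx * fz - fz * fx = (-Complex.I) • fy := by
    rw [neg_smul, ← comm_zx]; abel
  rw [Gmat_comm, h2, h1, comm_yz]
  simp only [smul_smul, Matrix.add_mulVec, Matrix.smul_mulVec,
    dotProduct_add, dotProduct_smul, smul_eq_mul, Fsp]
  ring

/-! ### The key pointwise identity -/

private lemma key (V c₀ c₁ c₂ : ℝ) {f : Matrix (Fin 5) (Fin 5) ℂ} (hf : fᴴ = f)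
    (hAf : (Amat * f)ᵀ = -(Amat * f)) (hfA : (f * Amat)ᵀ = -(f * Amat))
    (ψ : Fin 5 → ℂ)
    (hcomm : star ψ ⬝ᵥ ((Gmat ψ * f - f * Gmat ψ) *ᵥ ψ) = 0) :
    star (nonlinearRHS V c₀ c₁ c₂ ψ) ⬝ᵥ (f *ᵥ ψ)
      = star ψ ⬝ᵥ (f *ᵥ nonlinearRHS V c₀ c₁ c₂ ψ) := by
  rw [nonlinearRHS_eq]
  have hL : star (Hmat V c₀ c₁ ψ *ᵥ ψ + ((c₂ : ℂ) * A00 ψ) • (Amat *ᵥ star ψ))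
      = star ψ ᵥ* Hmat V c₀ c₁ ψ + star ((c₂ : ℂ) * A00 ψ) • (ψ ᵥ* Amat) := by
    rw [star_add, star_smul, Matrix.star_mulVec, Matrix.star_mulVec, star_star,
      Hmat_herm, Amat_herm]
  have hA1 : (ψ ᵥ* Amat) ⬝ᵥ (f *ᵥ ψ) = 0 := by
    rw [← Matrix.dotProduct_mulVec, Matrix.mulVec_mulVec]
    exact skew_vanish hAf ψ
  have hA2 : star ψ ⬝ᵥ ((f * Amat) *ᵥ star ψ) = 0 := skew_vanish hfA (star ψ)
  have hHf : Hmat V c₀ c₁ ψ * f - f * Hmat V c₀ c₁ ψ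
      = (c₁ : ℂ) • (Gmat ψ * f - f * Gmat ψ) := by
    simp only [Hmat, add_mul, mul_add, smul_mul_assoc, mul_smul_comm, one_mul,
      mul_one, smul_sub]
    abel
  have hcore : star ψ ⬝ᵥ ((Hmat V c₀ c₁ ψ * f) *ᵥ ψ)
      = star ψ ⬝ᵥ ((f * Hmat V c₀ c₁ ψ) *ᵥ ψ) := by
    have hcomm' : star ψ ⬝ᵥ ((Gmat ψ * f) *ᵥ ψ) - star ψ ⬝ᵥ ((f * Gmat ψ) *ᵥ ψ) = 0 := by
      simpa [Matrix.sub_mulVec, dotProduct_sub] using hcomm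
    have h := congrArg (fun M : Matrix (Fin 5) (Fin 5) ℂ => star ψ ⬝ᵥ (M *ᵥ ψ)) hHf
    simp only [Matrix.sub_mulVec, dotProduct_sub, Matrix.smul_mulVec,
      dotProduct_smul] at h
    rw [hcomm', smul_zero] at h
    exact sub_eq_zero.mp h
  rw [hL, add_dotProduct, smul_dotProduct, hA1, smul_zero, add_zero,
    ← Matrix.dotProduct_mulVec, Matrix.mulVec_mulVec, hcore,
    Matrix.mulVec_add, dotProduct_add, Matrix.mulVec_smul,
    dotProduct_smul, Matrix.mulVec_mulVec, Matrix.mulVec_mulVec, hA2,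
    smul_zero, add_zero]

/-! ### Differentiability of the spin expectations -/

private lemma hasDeriv_Fsp (f : Matrix (Fin 5) (Fin 5) ℂ) (Ψ : ℝ → Fin 5 → ℂ)
    (hΨ : Differentiable ℝ Ψ) (t : ℝ) :
    HasDerivAt (fun s => Fsp f (Ψ s))
      (star (deriv Ψ t) ⬝ᵥ (f *ᵥ Ψ t) + star (Ψ t) ⬝ᵥ (f *ᵥ deriv Ψ t)) t := by
  have hi : ∀ i, HasDerivAt (fun s => Ψ s i) (deriv Ψ t i) t :=
    hasDerivAt_pi.mp (hΨ t).hasDerivAt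
  have main : HasDerivAt (fun s => ∑ i, star (Ψ s i) * (∑ j, f i j * Ψ s j))
      (∑ i, (star (deriv Ψ t i) * (∑ j, f i j * Ψ t j)
        + star (Ψ t i) * (∑ j, f i j * deriv Ψ t j))) t := by
    refine HasDerivAt.fun_sum fun i _ => ?_
    exact ((hi i).star).mul (HasDerivAt.fun_sum fun j _ => ((hi j).const_mul (f i j)))
  have e1 : (fun s => Fsp f (Ψ s))
      = fun s => ∑ i, star (Ψ s i) * (∑ j, f i j * Ψ s j) := by
    funext s
    simp [Fsp, dotProduct, Matrix.mulVec]
  have e2 : star (deriv Ψ t) ⬝ᵥ (f *ᵥ Ψ t) + star (Ψ t) ⬝ᵥ (f *ᵥ deriv Ψ t)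
      = ∑ i, (star (deriv Ψ t i) * (∑ j, f i j * Ψ t j)
        + star (Ψ t i) * (∑ j, f i j * deriv Ψ t j)) := by
    simp [dotProduct, Matrix.mulVec, Finset.sum_add_distrib]
  rw [e1, e2]
  exact main

theorem nonlinear_subproblem_spin_conserved (V c₀ c₁ c₂ : ℝ)
    (Ψ : ℝ → Fin 5 → ℂ) (hΨ : Differentiable ℝ Ψ)
    (hode : ∀ t, Complex.I • deriv Ψ t = nonlinearRHS V c₀ c₁ c₂ (Ψ t)) :
    ∀ t, Fsp fx (Ψ t) = Fsp fx (Ψ 0) ∧ Fsp fy (Ψ t) = Fsp fy (Ψ 0) ∧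
      Fsp fz (Ψ t) = Fsp fz (Ψ 0) := by
  have hconst : ∀ (f : Matrix (Fin 5) (Fin 5) ℂ), fᴴ = f →
      (Amat * f)ᵀ = -(Amat * f) → (f * Amat)ᵀ = -(f * Amat) →
      (∀ ψ, star ψ ⬝ᵥ ((Gmat ψ * f - f * Gmat ψ) *ᵥ ψ) = 0) →
      ∀ t, Fsp f (Ψ t) = Fsp f (Ψ 0) := by
    intro f hf hAf hfA hcomm t
    have hdiff : Differentiable ℝ (fun s => Fsp f (Ψ s)) :=
      fun s => (hasDeriv_Fsp f Ψ hΨ s).differentiableAt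
    have hzero : ∀ s, deriv (fun s => Fsp f (Ψ s)) s = 0 := by
      intro s
      have hD := hasDeriv_Fsp f Ψ hΨ s
      have hd : deriv Ψ s = (-Complex.I) • nonlinearRHS V c₀ c₁ c₂ (Ψ s) := by
        have h := congrArg (fun v : Fin 5 → ℂ => (-Complex.I) • v) (hode s)
        simpa [smul_smul, neg_mul, Complex.I_mul_I, neg_neg, one_smul] using h
      rw [hD.deriv, hd]
      have hkey := key V c₀ c₁ c₂ hf hAf hfA (Ψ s) (hcomm (Ψ s))
      rw [star_smul, smul_dotProduct, Matrix.mulVec_smul,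
        dotProduct_smul]
      have hstarI : star (-Complex.I) = Complex.I := by
        simp
      rw [hstarI]
      rw [smul_eq_mul, smul_eq_mul]
      linear_combination Complex.I * hkey
    exact is_const_of_deriv_eq_zero hdiff hzero t 0
  intro t
  exact ⟨hconst fx fx_herm Afx_anti fxA_anti Gcomm_x t,
    hconst fy fy_herm Afy_anti fyA_anti Gcomm_y t,
    hconst fz fz_herm Afz_anti fzA_anti Gcomm_z t⟩
end
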